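/- The function mapping a labeled set S (containing a fixed nonempty base set L) to the total coverage value Σ_{x ∈ U} (M − θ_{S}(x)) is submodular: for L ⊆ A ⊆ B and a point p ∉ B, the marginal gain of adding p to A is at least the marginal gain of adding p to B, i.e., Σ_{x∈U}(θ_A(x) − θ_{A∪{p}}(x)) ≥ Σ_{x∈U}(θ_B(x) − θ_{B∪{p}}(x)). -/

import Mathlib

/-! Inserting `p` replaces `θ_S(x)` by `min ‖x - p‖₁ θ_S(x)`, a gain of `max (θ_S(x) - ‖x - p‖₁) 0`.
This gain is monotone in `θ_S(x)`, and `θ_S(x)` only decreases as `S` grows, so at each `x ∈ U`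
the gain for `A` dominates the gain for `B`. -/

theorem sub_min_le_sub_min {α : Type*} [AddCommGroup α] [LinearOrder α] [IsOrderedAddMonoid α]
    {a b : α} (c : α) (hba : b ≤ a) : b - min c b ≤ a - min c a := by
  rw [← max_sub_sub_left, ← max_sub_sub_left, sub_self, sub_self]
  exact max_le_max_right 0 (sub_le_sub_right hba c)

theorem Finset.inf'_sub_inf'_insert_le_of_subset {α β : Type*} [DecidableEq β] [AddCommGroup α]
    [LinearOrder α] [IsOrderedAddMonoid α] {s t : Finset β} (hst : s ⊆ t)
    (hs : s.Nonempty) (f : β → α) (p : β) :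
    t.inf' (hs.mono hst) f - (insert p t).inf' (insert_nonempty p t) f ≤
      s.inf' hs f - (insert p s).inf' (insert_nonempty p s) f := by
  rw [inf'_insert, inf'_insert]
  exact sub_min_le_sub_min (f p) (inf'_mono f hst hs)

theorem stmt_10_general (d : ℕ) (L A B U : Finset (Fin d → ℝ))
    (hL : L.Nonempty) (hLA : L ⊆ A) (hAB : A ⊆ B)
    (p : Fin d → ℝ) :
    ∑ x ∈ U, (B.inf' (hL.mono (hLA.trans hAB)) (fun z => ∑ i, |x i - z i|) -
        (insert p B).inf' (Finset.insert_nonempty p B) (fun z => ∑ i, |x i - z i|)) ≤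
      ∑ x ∈ U, (A.inf' (hL.mono hLA) (fun z => ∑ i, |x i - z i|) -
        (insert p A).inf' (Finset.insert_nonempty p A) (fun z => ∑ i, |x i - z i|)) :=
  Finset.sum_le_sum fun x _ =>
    Finset.inf'_sub_inf'_insert_le_of_subset hAB (hL.mono hLA) (fun z => ∑ i, |x i - z i|) p

/-- Submodularity of total coverage: for `L ⊆ A ⊆ B` and `p ∉ B`, the marginal
gain of adding `p` to `A` is at least the marginal gain of adding `p` to `B`:
`∑_{x∈U} (θ_A x - θ_{A∪{p}} x) ≥ ∑_{x∈U} (θ_B x - θ_{B∪{p}} x)`. -/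
theorem stmt_10 (d : ℕ) (hd : 0 < d) (L A B U : Finset (Fin d → ℝ))
    (hL : L.Nonempty) (hLA : L ⊆ A) (hAB : A ⊆ B)
    (p : Fin d → ℝ) (hp : p ∉ B) (M : ℝ) :
    ∑ x ∈ U, (B.inf' (hL.mono (hLA.trans hAB)) (fun z => ∑ i, |x i - z i|) -
        (insert p B).inf' (Finset.insert_nonempty p B) (fun z => ∑ i, |x i - z i|)) ≤
      ∑ x ∈ U, (A.inf' (hL.mono hLA) (fun z => ∑ i, |x i - z i|) -
        (insert p A).inf' (Finset.insert_nonempty p A) (fun z => ∑ i, |x i - z i|)) :=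
  stmt_10_general d L A B U hL hLA hAB p
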